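/- arXiv:2502.04543 — 7 statements merged into one kernel-verified Lean document; each statement's English description precedes it below -/
import Mathlib

section
/- Let S be a positive integer, d̄ = 2^S, and let φ̄ ∈ ℝ^{d̄×d̄} be an arbitrary matrix with rows φ̄_1,…,φ̄_{d̄}. For every fixed scale s ∈ {1,…,S}, the number of locations l ∈ {1,…,2^{S−s}} for which there exists some j ∈ {1,…,d̄} with ⟨φ̄, h^{(s,l)} ⊗ e^{(j)}⟩ ≠ 0 is at most Σ_{i=1}^{d̄−1} 1[φ̄_i ≠ φ̄_{i+1}], the number of indices i at which consecutive rows of φ̄ differ. -/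
open scoped Classical

noncomputable section

/-- The Haar vector `h^(s,l)` in `ℝ^(2^S)` (1-based math indices mapped to 0-based `Fin`). -/
def haarVec (S s l : ℕ) : Fin (2 ^ S) → ℝ := fun i =>
  if 2 ^ s * (l - 1) ≤ (i : ℕ) ∧ (i : ℕ) < 2 ^ s * (l - 1) + 2 ^ (s - 1) then 1
  else if 2 ^ s * (l - 1) + 2 ^ (s - 1) ≤ (i : ℕ) ∧ (i : ℕ) < 2 ^ s * l then -1
  else 0

/-- The Haar collection ℋ: the all-ones vector together with all `h^(s,l)`,
`s ∈ [1,S]`, `l ∈ [1, 2^(S-s)]`. -/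
def haarSet (S : ℕ) : Set (Fin (2 ^ S) → ℝ) :=
  {fun _ => (1 : ℝ)} ∪
    {v | ∃ s l : ℕ, 1 ≤ s ∧ s ≤ S ∧ 1 ≤ l ∧ l ≤ 2 ^ (S - s) ∧ v = haarVec S s l}

/-- Outer product of two vectors, as a matrix. -/
def outer {n : ℕ} (x y : Fin n → ℝ) : Matrix (Fin n) (Fin n) ℝ :=
  Matrix.of fun i j => x i * y j

/-- Frobenius inner product of two square matrices. -/
def frob {n : ℕ} (A B : Matrix (Fin n) (Fin n) ℝ) : ℝ := ∑ i, ∑ j, A i j * B i j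

/-- The `j`-th canonical basis vector `e^(j)`. -/
def eVec {n : ℕ} (j : Fin n) : Fin n → ℝ := fun k => if k = j then 1 else 0

/-- Right stochastic matrix: nonnegative entries, each row sums to 1. -/
def IsStochastic {n : ℕ} (M : Matrix (Fin n) (Fin n) ℝ) : Prop :=
  (∀ i j, 0 ≤ M i j) ∧ ∀ i, ∑ j, M i j = 1

/-- Membership in the probability simplex Δ(n). -/
def InSimplex {n : ℕ} (p : Fin n → ℝ) : Prop := (∀ i, 0 ≤ p i) ∧ ∑ i, p i = 1

/-- Action of a (stochastic) matrix on a distribution: `(φ(p))_j = Σ_i p_i φ_{i,j}`. -/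
def act {n : ℕ} (M : Matrix (Fin n) (Fin n) ℝ) (p : Fin n → ℝ) : Fin n → ℝ :=
  fun j => ∑ i, p i * M i j

/-- `Σ_{i=1}^{n-1} 1[M_i ≠ M_{i+1}]`: the number of consecutive-row changes of `M`. -/
def rowSwitch {n : ℕ} (M : Matrix (Fin n) (Fin n) ℝ) : ℕ :=
  (Finset.univ.filter fun i : Fin n =>
    ∃ h : (i : ℕ) + 1 < n, M i ≠ M ⟨(i : ℕ) + 1, h⟩).card

/-- Uniformity `d^unif_φ`: the frequency of the most frequent row of `φ`. -/
def dUnif {n : ℕ} (M : Matrix (Fin n) (Fin n) ℝ) : ℕ :=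
  Finset.univ.sup fun i : Fin n => (Finset.univ.filter fun k : Fin n => M k = M i).card

/-- Degree of self-map `d^self_φ`: the number of rows `i` with `φ_i = e^(i)`. -/
def dSelf {n : ℕ} (M : Matrix (Fin n) (Fin n) ℝ) : ℕ :=
  (Finset.univ.filter fun i : Fin n => M i = eVec i).card

/-!
An active location `l` forces a row change inside its dyadic block `[2^s (l-1), 2^s l)`:
if the rows of `φ̄` were constant there, `⟨φ̄, h^(s,l) ⊗ e^(j)⟩ = φ̄_{2^s (l-1), j} · ∑ᵢ h^(s,l)ᵢ = 0`.
The blocks are disjoint, so `i ↦ ⌊i / 2^s⌋ + 1` maps the row changes onto the active locations.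
-/

open Finset

lemma frob_outer_eVec {n : ℕ} (M : Matrix (Fin n) (Fin n) ℝ) (x : Fin n → ℝ) (j : Fin n) :
    frob M (outer x (eVec j)) = ∑ i, M i j * x i := by
  simp [frob, outer, eVec]

lemma sum_fin_ite_mem_Ico {N a b : ℕ} (hbN : b ≤ N) :
    ∑ i : Fin N, (if (i : ℕ) ∈ Ico a b then (1 : ℝ) else 0) = (b - a : ℕ) := by
  rw [Fin.sum_univ_eq_sum_range (fun i => if i ∈ Ico a b then (1 : ℝ) else 0), sum_ite_mem,
    inter_eq_right.2 fun i hi => by simp only [mem_Ico, mem_range] at hi ⊢; omega]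
  simp

lemma Fin.apply_eq_of_forall_apply_succ_eq {β : Type*} {n a b : ℕ} {f : Fin n → β}
    (h : ∀ (k : Fin n) (hk : (k : ℕ) + 1 < n), a ≤ k → (k : ℕ) + 1 < b → f k = f ⟨k + 1, hk⟩)
    (ha : a < n) (i : Fin n) (hai : a ≤ i) (hib : (i : ℕ) < b) : f i = f ⟨a, ha⟩ := by
  obtain ⟨i, hi⟩ := i
  dsimp only at hai hib ⊢
  revert hi hib
  induction i, hai using Nat.le_induction with
  | base => exact fun _ _ => rfl
  | succ m ham ih =>
    exact fun hi hib => (h ⟨m, by omega⟩ hi ham hib).symm.trans (ih (by omega) (by omega))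

section Haar

variable {S s k : ℕ}

/- Locations are written `k + 1`, so that the block of `h^(s,k+1)` is
`[2^s k, 2^s k + 2^s)` with no truncated subtraction `l - 1`. -/
lemma haarVec_succ_eq_sub (hs : 1 ≤ s) (i : Fin (2 ^ S)) :
    haarVec S s (k + 1) i =
      (if (i : ℕ) ∈ Ico (2 ^ s * k) (2 ^ s * k + 2 ^ (s - 1)) then 1 else 0) -
      (if (i : ℕ) ∈ Ico (2 ^ s * k + 2 ^ (s - 1)) (2 ^ s * k + 2 ^ s) then 1 else 0) := by
  have hpow : 2 ^ (s - 1) < 2 ^ s := Nat.pow_lt_pow_right one_lt_two (by omega)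
  simp only [haarVec, Nat.add_sub_cancel, mul_add_one, mem_Ico]
  split_ifs <;> first | omega | norm_num

lemma haarVec_succ_support (hs : 1 ≤ s) {i : Fin (2 ^ S)}
    (hi : haarVec S s (k + 1) i ≠ 0) : 2 ^ s * k ≤ i ∧ (i : ℕ) < 2 ^ s * k + 2 ^ s := by
  have hpow : 2 ^ (s - 1) < 2 ^ s := Nat.pow_lt_pow_right one_lt_two (by omega)
  have hpos : 0 < 2 ^ (s - 1) := by positivity
  rw [haarVec_succ_eq_sub hs] at hi
  simp only [mem_Ico] at hi
  split_ifs at hi <;> first | (constructor <;> omega) | simp at hi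

lemma sum_haarVec_succ (hs : 1 ≤ s) (hk : 2 ^ s * k + 2 ^ s ≤ 2 ^ S) :
    ∑ i, haarVec S s (k + 1) i = 0 := by
  have hpow : 2 ^ s = 2 ^ (s - 1) + 2 ^ (s - 1) := by
    rw [← two_mul, ← pow_succ', Nat.sub_add_cancel hs]
  have hpos : 0 < 2 ^ (s - 1) := by positivity
  simp only [haarVec_succ_eq_sub hs, sum_sub_distrib]
  rw [sum_fin_ite_mem_Ico (by omega), sum_fin_ite_mem_Ico hk, sub_eq_zero]
  congr 1
  omega

lemma sum_mul_haarVec_succ_eq_zero (hs : 1 ≤ s) (hk : 2 ^ s * k + 2 ^ s ≤ 2 ^ S)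
    {g : Fin (2 ^ S) → ℝ} {c : ℝ}
    (hg : ∀ i : Fin (2 ^ S), 2 ^ s * k ≤ i → (i : ℕ) < 2 ^ s * k + 2 ^ s → g i = c) :
    ∑ i, g i * haarVec S s (k + 1) i = 0 :=
  calc ∑ i, g i * haarVec S s (k + 1) i = ∑ i, c * haarVec S s (k + 1) i :=
        sum_congr rfl fun i _ => by
          by_cases hi : haarVec S s (k + 1) i = 0
          · simp [hi]
          · obtain ⟨hi₁, hi₂⟩ := haarVec_succ_support hs hi
            rw [hg i hi₁ hi₂]
    _ = 0 := by rw [← mul_sum, sum_haarVec_succ hs hk, mul_zero]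

lemma exists_row_ne_succ_of_frob_haarVec_ne_zero (hs : 1 ≤ s) (hk : 2 ^ s * k + 2 ^ s ≤ 2 ^ S)
    {φ : Matrix (Fin (2 ^ S)) (Fin (2 ^ S)) ℝ} {j : Fin (2 ^ S)}
    (hφ : frob φ (outer (haarVec S s (k + 1)) (eVec j)) ≠ 0) :
    ∃ i : Fin (2 ^ S), ∃ hi : (i : ℕ) + 1 < 2 ^ S,
      2 ^ s * k ≤ i ∧ (i : ℕ) + 1 < 2 ^ s * k + 2 ^ s ∧ φ i ≠ φ ⟨i + 1, hi⟩ := by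
  by_contra! hconst
  have hA : 2 ^ s * k < 2 ^ S := by have := Nat.two_pow_pos s; omega
  refine hφ ?_
  rw [frob_outer_eVec]
  exact sum_mul_haarVec_succ_eq_zero hs hk fun i hi₁ hi₂ =>
    congrFun (Fin.apply_eq_of_forall_apply_succ_eq hconst hA i hi₁ hi₂) j

end Haar

theorem card_active_locations_le_rowSwitch_general (S : ℕ)
    (φ : Matrix (Fin (2 ^ S)) (Fin (2 ^ S)) ℝ)
    (s : ℕ) (hs1 : 1 ≤ s) (hs2 : s ≤ S) :
    ((Finset.Icc 1 (2 ^ (S - s))).filter fun l =>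
        ∃ j : Fin (2 ^ S), frob φ (outer (haarVec S s l) (eVec j)) ≠ 0).card ≤
      rowSwitch φ := by
  refine card_le_card_of_surjOn (fun i : Fin (2 ^ S) => (i : ℕ) / 2 ^ s + 1) ?_
  intro l hl
  obtain ⟨⟨hl1, hl2⟩, j, hj⟩ := by simpa using hl
  obtain ⟨k, rfl⟩ : ∃ k, l = k + 1 := ⟨l - 1, by omega⟩
  have hk : 2 ^ s * k + 2 ^ s ≤ 2 ^ S :=
    calc 2 ^ s * k + 2 ^ s = 2 ^ s * (k + 1) := by ring
      _ ≤ 2 ^ s * 2 ^ (S - s) := Nat.mul_le_mul_left _ hl2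
      _ = 2 ^ S := by rw [← pow_add, Nat.add_sub_cancel' hs2]
  obtain ⟨i, hi, hik, hik', hne⟩ := exists_row_ne_succ_of_frob_haarVec_ne_zero hs1 hk hj
  refine ⟨i, by simpa [rowSwitch] using ⟨hi, hne⟩, ?_⟩
  dsimp only
  rw [Nat.div_eq_of_lt_le (by rw [mul_comm]; exact hik) (by rw [add_one_mul, mul_comm]; omega)]

/-- for a fixed scale `s`, the number of locations `l ∈ [1, 2^(S-s)]`
with `⟨φ̄, h^(s,l) ⊗ e^(j)⟩ ≠ 0` for some `j` is at most the number of consecutive-row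
changes `Σ_{i=1}^{2^S-1} 1[φ̄_i ≠ φ̄_{i+1}]`. -/
theorem card_active_locations_le_rowSwitch (S : ℕ) (hS : 1 ≤ S)
    (φ : Matrix (Fin (2 ^ S)) (Fin (2 ^ S)) ℝ)
    (s : ℕ) (hs1 : 1 ≤ s) (hs2 : s ≤ S) :
    ((Finset.Icc 1 (2 ^ (S - s))).filter fun l =>
        ∃ j : Fin (2 ^ S), frob φ (outer (haarVec S s l) (eVec j)) ≠ 0).card ≤
      rowSwitch φ :=
  card_active_locations_le_rowSwitch_general S φ s hs1 hs2
end
end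

section
/- Let d be a positive integer, d̄ = 2^{⌈log₂ d⌉}, and let 𝒤 be a relabeling function with inverse 𝒤⁻¹. For every right stochastic matrix φ ∈ 𝒮(d), there exists φ̄ ∈ 𝒮(d̄) with rows φ̄_1,…,φ̄_{d̄} such that: (i) Σ_{i=1}^{d̄−1} 1[φ̄_i ≠ φ̄_{i+1}] ≤ 2(d − d^unif_φ); and (ii) for every p̄ ∈ Δ(d̄) and every l ∈ ℝ^d, defining p ∈ Δ(d) by p_i = Σ_{ī ∈ 𝒤(i)} p̄_ī and l̄ ∈ ℝ^{d̄} by l̄_ī = l_{𝒤⁻¹(ī)}, it holds that ⟨φ(p), l⟩ = ⟨φ̄(p̄), l̄⟩. -/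
open scoped Classical

noncomputable section

/-- given a relabeling function `𝒤` (with inverse `𝒤⁻¹`), every
`φ ∈ 𝒮(d)` admits an augmentation `φ̄ ∈ 𝒮(d̄)`, `d̄ = 2^⌈log₂ d⌉`, with at most
`2(d − d^unif_φ)` consecutive-row changes, which preserves the loss:
`⟨φ(p), l⟩ = ⟨φ̄(p̄), l̄⟩` for every `p̄ ∈ Δ(d̄)` and `l ∈ ℝ^d`, where
`p_i = Σ_{ib ∈ 𝒤(i)} p̄_ib` and `l̄_ib = l_{𝒤⁻¹(ib)}`. -/
theorem exists_augmented_comparator_uniformity (d : ℕ) (hd : 0 < d)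
    (I : Fin d → Finset (Fin (2 ^ Nat.clog 2 d)))
    (hne : ∀ i, (I i).Nonempty)
    (hconsec : ∀ i, ∀ a c : Fin (2 ^ Nat.clog 2 d), a ∈ I i → c ∈ I i →
      ∀ b : Fin (2 ^ Nat.clog 2 d), a ≤ b → b ≤ c → b ∈ I i)
    (hcard : ∀ i, (I i).card ≤ 2)
    (hdisj : ∀ i₁ i₂, i₁ ≠ i₂ → Disjoint (I i₁) (I i₂))
    (hcover : Finset.univ.biUnion I = Finset.univ)
    (Iinv : Fin (2 ^ Nat.clog 2 d) → Fin d)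
    (hinv : ∀ ib, ib ∈ I (Iinv ib))
    (φ : Matrix (Fin d) (Fin d) ℝ) (hφ : IsStochastic φ) :
    ∃ φbar : Matrix (Fin (2 ^ Nat.clog 2 d)) (Fin (2 ^ Nat.clog 2 d)) ℝ,
      IsStochastic φbar ∧
      rowSwitch φbar ≤ 2 * (d - dUnif φ) ∧
      ∀ pbar : Fin (2 ^ Nat.clog 2 d) → ℝ, InSimplex pbar → ∀ l : Fin d → ℝ,
        ∑ j, act φ (fun i => ∑ ib ∈ I i, pbar ib) j * l j =
          ∑ jb, act φbar pbar jb * l (Iinv jb) := by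
  -- membership determines Iinv
  have hmem : ∀ (i : Fin d) (ib : Fin (2 ^ Nat.clog 2 d)), ib ∈ I i → Iinv ib = i := by
    intro i ib h
    by_contra hne'
    have := (hdisj _ _ hne').le_bot (Finset.mem_inter.mpr ⟨hinv ib, h⟩)
    simpa using this
  -- representative of each fiber
  set rep : Fin d → Fin (2 ^ Nat.clog 2 d) := fun j => (I j).min' (hne j) with hrepdef
  have hrepmem : ∀ j, rep j ∈ I j := fun j => (I j).min'_mem (hne j)
  have hrepinv : ∀ j, Iinv (rep j) = j := fun j => hmem j (rep j) (hrepmem j)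
  -- the augmented matrix
  set φbar : Matrix (Fin (2 ^ Nat.clog 2 d)) (Fin (2 ^ Nat.clog 2 d)) ℝ :=
    Matrix.of (fun ib jb => if jb = rep (Iinv jb) then φ (Iinv ib) (Iinv jb) else 0)
    with hφbar
  -- sums over representatives
  have hsumrep : ∀ F : Fin d → ℝ,
      ∑ jb ∈ Finset.univ.filter (fun jb : Fin (2 ^ Nat.clog 2 d) => jb = rep (Iinv jb)), F (Iinv jb)
        = ∑ j, F j := by
    intro F
    refine Finset.sum_nbij' Iinv rep ?_ ?_ ?_ ?_ ?_
    · intro a _; exact Finset.mem_univ _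
    · intro a _
      simp only [Finset.mem_filter, Finset.mem_univ, true_and]
      rw [hrepinv]
    · intro a ha
      simp only [Finset.mem_filter, Finset.mem_univ, true_and] at ha
      exact ha.symm
    · intro a _; exact hrepinv a
    · intro a _; rfl
  have hrowsum : ∀ ib : Fin (2 ^ Nat.clog 2 d), ∑ jb, φbar ib jb = 1 := by
    intro ib
    have : ∑ jb, φbar ib jb
        = ∑ jb ∈ Finset.univ.filter (fun jb : Fin (2 ^ Nat.clog 2 d) => jb = rep (Iinv jb)),
            φ (Iinv ib) (Iinv jb) := by
      rw [Finset.sum_filter]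
      rfl
    rw [this, hsumrep (fun j => φ (Iinv ib) j)]
    exact hφ.2 (Iinv ib)
  -- rows of φbar are equal iff corresponding rows of φ are equal
  have hroweq : ∀ ib ib' : Fin (2 ^ Nat.clog 2 d), φbar ib = φbar ib' ↔ φ (Iinv ib) = φ (Iinv ib') := by
    intro ib ib'
    constructor
    · intro h
      funext j
      have h1 := congrFun h (rep j)
      simpa [hφbar, Matrix.of_apply, hrepinv j] using h1
    · intro h
      funext jb
      simp only [hφbar, Matrix.of_apply, h]
  refine ⟨φbar, ⟨?_, hrowsum⟩, ?_, ?_⟩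
  · -- nonnegativity
    intro i j
    simp only [hφbar, Matrix.of_apply]
    split
    · exact hφ.1 _ _
    · exact le_refl 0
  · -- rowSwitch bound
    obtain ⟨i₀, -, hi₀⟩ := Finset.exists_mem_eq_sup Finset.univ
      ⟨⟨0, hd⟩, Finset.mem_univ _⟩
      (fun i : Fin d => (Finset.univ.filter fun k : Fin d => φ k = φ i).card)
    set Bad : Finset (Fin d) := Finset.univ.filter (fun j => ¬ φ j = φ i₀) with hBad
    have hBadcard : Bad.card = d - dUnif φ := by
      have h1 : (Finset.univ.filter fun k : Fin d => φ k = φ i₀).card + Bad.card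
          = d := by
        rw [Finset.card_filter_add_card_filter_not]
        simp
      have h2 : dUnif φ = (Finset.univ.filter fun k : Fin d => φ k = φ i₀).card := hi₀
      omega
    -- inject the switch set into Bad × Bool
    set S : Finset (Fin (2 ^ Nat.clog 2 d)) := Finset.univ.filter (fun ib : Fin (2 ^ Nat.clog 2 d) =>
      ∃ h : (ib : ℕ) + 1 < 2 ^ Nat.clog 2 d, φbar ib ≠ φbar ⟨(ib : ℕ) + 1, h⟩) with hS
    have hSdef : rowSwitch φbar = S.card := rfl
    set g : Fin (2 ^ Nat.clog 2 d) → Fin d × Bool := fun ib =>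
      if h : (ib : ℕ) + 1 < 2 ^ Nat.clog 2 d then
        (if φ (Iinv ib) ≠ φ i₀ then (Iinv ib, false)
          else (Iinv ⟨(ib : ℕ) + 1, h⟩, true))
      else (Iinv ib, false) with hg
    have key : ∀ ib ∈ S, ∀ (h : (ib : ℕ) + 1 < 2 ^ Nat.clog 2 d), Iinv ib ≠ Iinv ⟨(ib : ℕ) + 1, h⟩ := by
      intro ib hib h
      simp only [hS, Finset.mem_filter, Finset.mem_univ, true_and] at hib
      obtain ⟨h', hneq⟩ := hib
      intro he
      exact hneq ((hroweq ib ⟨(ib : ℕ) + 1, h'⟩).mpr (by rw [he]))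
    have hmaps : ∀ ib ∈ S, g ib ∈ Bad ×ˢ (Finset.univ : Finset Bool) := by
      intro ib hib
      have hib' := hib
      simp only [hS, Finset.mem_filter, Finset.mem_univ, true_and] at hib'
      obtain ⟨h, hneq⟩ := hib'
      simp only [hg, dif_pos h]
      by_cases hc : φ (Iinv ib) ≠ φ i₀
      · simp only [if_pos hc]
        exact Finset.mem_product.mpr ⟨Finset.mem_filter.mpr ⟨Finset.mem_univ _, hc⟩,
          Finset.mem_univ _⟩
      · simp only [if_neg hc]
        push_neg at hc
        refine Finset.mem_product.mpr ⟨Finset.mem_filter.mpr ⟨Finset.mem_univ _, ?_⟩,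
          Finset.mem_univ _⟩
        intro hc2
        exact hneq ((hroweq ib ⟨(ib : ℕ) + 1, h⟩).mpr (by rw [hc, hc2]))
    have hinj : Set.InjOn g S := by
      intro a ha b hb hab
      rw [Finset.mem_coe] at ha hb
      simp only [hS, Finset.mem_filter, Finset.mem_univ, true_and] at ha hb
      obtain ⟨hA, hAne⟩ := ha
      obtain ⟨hB, hBne⟩ := hb
      have kA : Iinv a ≠ Iinv ⟨(a : ℕ) + 1, hA⟩ := by
        intro he
        exact hAne ((hroweq _ _).mpr (by rw [he]))
      have kB : Iinv b ≠ Iinv ⟨(b : ℕ) + 1, hB⟩ := by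
        intro he
        exact hBne ((hroweq _ _).mpr (by rw [he]))
      simp only [hg, dif_pos hA, dif_pos hB] at hab
      by_cases hca : φ (Iinv a) ≠ φ i₀ <;> by_cases hcb : φ (Iinv b) ≠ φ i₀
      · simp only [if_pos hca, if_pos hcb, Prod.mk.injEq] at hab
        -- both map to their own fiber; a and b are both "tops" of the same fiber
        by_contra hne'
        have he : Iinv a = Iinv b := hab.1
        -- wlog a < b
        rcases lt_or_gt_of_ne (fun h => hne' (by exact h)) with hlt | hlt
        · have hb1 : ((a : ℕ) + 1 : ℕ) ≤ (b : ℕ) := hlt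
          have : (⟨(a : ℕ) + 1, hA⟩ : Fin (2 ^ Nat.clog 2 d)) ∈ I (Iinv a) := by
            refine hconsec (Iinv a) a b (hinv a) (by rw [he]; exact hinv b) _ ?_ ?_
            · exact Nat.le_succ _
            · exact hb1
          exact kA (hmem _ _ this).symm
        · have hb1 : ((b : ℕ) + 1 : ℕ) ≤ (a : ℕ) := hlt
          have : (⟨(b : ℕ) + 1, hB⟩ : Fin (2 ^ Nat.clog 2 d)) ∈ I (Iinv b) := by
            refine hconsec (Iinv b) b a (hinv b) (by rw [← he]; exact hinv a) _ ?_ ?_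
            · exact Nat.le_succ _
            · exact hb1
          exact kB (hmem _ _ this).symm
      · simp only [if_pos hca, if_neg hcb, Prod.mk.injEq] at hab
        exact absurd hab.2 (by simp)
      · simp only [if_neg hca, if_pos hcb, Prod.mk.injEq] at hab
        exact absurd hab.2 (by simp)
      · simp only [if_neg hca, if_neg hcb, Prod.mk.injEq] at hab
        -- both map to the fiber of their successor; successors are "bottoms"
        by_contra hne'
        have he : Iinv (⟨(a : ℕ) + 1, hA⟩ : Fin (2 ^ Nat.clog 2 d)) = Iinv ⟨(b : ℕ) + 1, hB⟩ := hab.1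
        rcases lt_or_gt_of_ne (fun h => hne' (by exact h)) with hlt | hlt
        · have hb1 : ((a : ℕ) + 1 : ℕ) ≤ (b : ℕ) := hlt
          have : b ∈ I (Iinv (⟨(b : ℕ) + 1, hB⟩ : Fin (2 ^ Nat.clog 2 d))) := by
            refine hconsec _ (⟨(a : ℕ) + 1, hA⟩ : Fin (2 ^ Nat.clog 2 d)) (⟨(b : ℕ) + 1, hB⟩ : Fin (2 ^ Nat.clog 2 d))
              (by rw [← he]; exact hinv _) (hinv _) b hb1 (Nat.le_succ _)
          exact kB (hmem _ _ this)
        · have hb1 : ((b : ℕ) + 1 : ℕ) ≤ (a : ℕ) := hlt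
          have : a ∈ I (Iinv (⟨(a : ℕ) + 1, hA⟩ : Fin (2 ^ Nat.clog 2 d))) := by
            refine hconsec _ (⟨(b : ℕ) + 1, hB⟩ : Fin (2 ^ Nat.clog 2 d)) (⟨(a : ℕ) + 1, hA⟩ : Fin (2 ^ Nat.clog 2 d))
              (by rw [he]; exact hinv _) (hinv _) a hb1 (Nat.le_succ _)
          exact kA (hmem _ _ this)
    have hle : S.card ≤ (Bad ×ˢ (Finset.univ : Finset Bool)).card :=
      Finset.card_le_card_of_injOn g hmaps hinj
    have : (Bad ×ˢ (Finset.univ : Finset Bool)).card = Bad.card * 2 := by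
      rw [Finset.card_product]
      simp
    rw [hSdef]
    omega
  · -- loss preservation
    intro pbar _ l
    have lhs : ∀ j : Fin d, act φ (fun i => ∑ ib ∈ I i, pbar ib) j
        = ∑ ib, pbar ib * φ (Iinv ib) j := by
      intro j
      have : ∑ ib, pbar ib * φ (Iinv ib) j
          = ∑ ib ∈ Finset.univ.biUnion I, pbar ib * φ (Iinv ib) j := by
        rw [hcover]
      rw [this, Finset.sum_biUnion]
      · unfold act
        refine Finset.sum_congr rfl ?_
        intro i _
        rw [Finset.sum_mul]
        refine Finset.sum_congr rfl ?_
        intro ib hib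
        rw [hmem i ib hib]
      · intro i₁ _ i₂ _ hne'
        exact hdisj i₁ i₂ hne'
    have rhs : ∑ jb, act φbar pbar jb * l (Iinv jb)
        = ∑ j, (∑ ib, pbar ib * φ (Iinv ib) j) * l j := by
      have step : ∀ jb : Fin (2 ^ Nat.clog 2 d), act φbar pbar jb * l (Iinv jb)
          = if jb = rep (Iinv jb) then
              (∑ ib, pbar ib * φ (Iinv ib) (Iinv jb)) * l (Iinv jb) else 0 := by
        intro jb
        unfold act
        by_cases hc : jb = rep (Iinv jb)
        · rw [if_pos hc]
          congr 1
          refine Finset.sum_congr rfl ?_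
          intro ib _
          simp only [hφbar, Matrix.of_apply, if_pos hc]
        · rw [if_neg hc]
          have : ∀ ib : Fin (2 ^ Nat.clog 2 d), pbar ib * φbar ib jb = 0 := by
            intro ib
            simp only [hφbar, Matrix.of_apply, if_neg hc, mul_zero]
          rw [Finset.sum_congr rfl (fun ib _ => this ib)]
          simp
      calc ∑ jb, act φbar pbar jb * l (Iinv jb)
          = ∑ jb, (if jb = rep (Iinv jb) then
              (∑ ib, pbar ib * φ (Iinv ib) (Iinv jb)) * l (Iinv jb) else 0) :=
            Finset.sum_congr rfl (fun jb _ => step jb)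
        _ = ∑ jb ∈ Finset.univ.filter (fun jb : Fin (2 ^ Nat.clog 2 d) => jb = rep (Iinv jb)),
              (∑ ib, pbar ib * φ (Iinv ib) (Iinv jb)) * l (Iinv jb) :=
            (Finset.sum_filter _ _).symm
        _ = ∑ j, (∑ ib, pbar ib * φ (Iinv ib) j) * l j :=
            hsumrep (fun j => (∑ ib, pbar ib * φ (Iinv ib) j) * l j)
    rw [rhs]
    exact Finset.sum_congr rfl (fun j _ => by rw [lhs j])
end
end

section
/- Let d be a positive integer, d̄ = 2^{⌈log₂ d⌉}, and let 𝒤 be a relabeling function with inverse 𝒤⁻¹. For every right stochastic matrix φ ∈ 𝒮(d), there exists φ̄ ∈ 𝒮(d̄) such that: (i) d̄ − d^self_{φ̄} ≤ 2(d − d^self_φ); and (ii) for every p̄ ∈ Δ(d̄) and every l ∈ ℝ^d, defining p ∈ Δ(d) by p_i = Σ_{ī ∈ 𝒤(i)} p̄_ī and l̄ ∈ ℝ^{d̄} by l̄_ī = l_{𝒤⁻¹(ī)}, it holds that ⟨φ(p), l⟩ = ⟨φ̄(p̄), l̄⟩. -/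
open scoped Classical

noncomputable section

/-- given a relabeling function `𝒤` (with inverse `𝒤⁻¹`), every
`φ ∈ 𝒮(d)` admits an augmentation `φ̄ ∈ 𝒮(d̄)`, `d̄ = 2^⌈log₂ d⌉`, with
`d̄ − d^self_φ̄ ≤ 2(d − d^self_φ)`, which preserves the loss:
`⟨φ(p), l⟩ = ⟨φ̄(p̄), l̄⟩` for every `p̄ ∈ Δ(d̄)` and `l ∈ ℝ^d`, where
`p_i = Σ_{ib ∈ 𝒤(i)} p̄_ib` and `l̄_ib = l_{𝒤⁻¹(ib)}`. -/
theorem exists_augmented_comparator_self_map (d : ℕ) (hd : 0 < d)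
    (I : Fin d → Finset (Fin (2 ^ Nat.clog 2 d)))
    (hne : ∀ i, (I i).Nonempty)
    (hconsec : ∀ i, ∀ a c : Fin (2 ^ Nat.clog 2 d), a ∈ I i → c ∈ I i →
      ∀ b : Fin (2 ^ Nat.clog 2 d), a ≤ b → b ≤ c → b ∈ I i)
    (hcard : ∀ i, (I i).card ≤ 2)
    (hdisj : ∀ i₁ i₂, i₁ ≠ i₂ → Disjoint (I i₁) (I i₂))
    (hcover : Finset.univ.biUnion I = Finset.univ)
    (Iinv : Fin (2 ^ Nat.clog 2 d) → Fin d)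
    (hinv : ∀ ib, ib ∈ I (Iinv ib))
    (φ : Matrix (Fin d) (Fin d) ℝ) (hφ : IsStochastic φ) :
    ∃ φbar : Matrix (Fin (2 ^ Nat.clog 2 d)) (Fin (2 ^ Nat.clog 2 d)) ℝ,
      IsStochastic φbar ∧
      2 ^ Nat.clog 2 d - dSelf φbar ≤ 2 * (d - dSelf φ) ∧
      ∀ pbar : Fin (2 ^ Nat.clog 2 d) → ℝ, InSimplex pbar → ∀ l : Fin d → ℝ,
        ∑ j, act φ (fun i => ∑ ib ∈ I i, pbar ib) j * l j =
          ∑ jb, act φbar pbar jb * l (Iinv jb) := by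
  classical
  -- uniqueness of the fiber
  have huniq : ∀ (j : Fin d) (jb : Fin (2 ^ Nat.clog 2 d)), jb ∈ I j → Iinv jb = j := by
    intro j jb hjb
    by_contra h
    exact (Finset.disjoint_left.mp (hdisj _ _ h) (hinv jb)) hjb
  -- representative of each fiber
  let rep : Fin d → Fin (2 ^ Nat.clog 2 d) := fun i => (hne i).choose
  have hrepmem : ∀ i : Fin d, rep i ∈ I i := fun i => (hne i).choose_spec
  let pick : Fin (2 ^ Nat.clog 2 d) → Fin d → Fin (2 ^ Nat.clog 2 d) :=
    fun ib j => if ib ∈ I j then ib else rep j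
  have hpickmem : ∀ ib j, pick ib j ∈ I j := by
    intro ib j
    simp only [pick]
    split
    · assumption
    · exact hrepmem j
  have hpickself : ∀ ib (j : Fin d), ib ∈ I j → pick ib j = ib := by
    intro ib j hib
    simp only [pick, if_pos hib]
  set φbar : Matrix (Fin (2 ^ Nat.clog 2 d)) (Fin (2 ^ Nat.clog 2 d)) ℝ :=
    Matrix.of fun ib jb =>
      if jb = pick ib (Iinv jb) then φ (Iinv ib) (Iinv jb) else 0 with hφbar
  -- partition sum lemma
  have hpart : ∀ f : Fin (2 ^ Nat.clog 2 d) → ℝ,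
      ∑ jb, f jb = ∑ j : Fin d, ∑ jb ∈ I j, f jb := by
    intro f
    rw [← hcover, Finset.sum_biUnion]
    intro x _ y _ hxy
    exact hdisj x y hxy
  -- inner sum over a fiber
  have hinner : ∀ (ib : Fin (2 ^ Nat.clog 2 d)) (j : Fin d) (g : Fin d → ℝ),
      ∑ jb ∈ I j, (if jb = pick ib (Iinv jb) then g (Iinv jb) else 0) = g j := by
    intro ib j g
    have h1 : ∀ jb ∈ I j, (if jb = pick ib (Iinv jb) then g (Iinv jb) else 0) =
        (if jb = pick ib j then g j else 0) := by
      intro jb hjb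
      rw [huniq j jb hjb]
    rw [Finset.sum_congr rfl h1, Finset.sum_ite_eq' (I j) (pick ib j) (fun _ => g j),
      if_pos (hpickmem ib j)]
  -- row sums of φbar
  have hrowsum : ∀ ib, ∑ jb, φbar ib jb = 1 := by
    intro ib
    rw [hpart]
    have : ∀ j : Fin d, ∑ jb ∈ I j, φbar ib jb = φ (Iinv ib) j := by
      intro j
      exact hinner ib j (fun j' => φ (Iinv ib) j')
    rw [Finset.sum_congr rfl (fun j _ => this j)]
    exact hφ.2 (Iinv ib)
  -- self rows transfer
  have hself : ∀ (i : Fin d) (ib : Fin (2 ^ Nat.clog 2 d)), ib ∈ I i → φ i = eVec i →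
      φbar ib = eVec ib := by
    intro i ib hib hφi
    have hIinv : Iinv ib = i := huniq i ib hib
    funext jb
    show (if jb = pick ib (Iinv jb) then φ (Iinv ib) (Iinv jb) else 0) = eVec ib jb
    rw [hIinv, hφi]
    by_cases hjb : jb = ib
    · subst hjb
      have h3 : pick jb (Iinv jb) = jb := by rw [hIinv]; exact hpickself jb i hib
      rw [if_pos h3.symm, hIinv]
      simp [eVec]
    · simp only [eVec, if_neg hjb]
      by_cases h2 : Iinv jb = i
      · rw [h2, hpickself ib i hib, if_neg hjb]
      · split
        · simp [eVec, h2]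
        · rfl
  refine ⟨φbar, ⟨fun ib jb => ?_, hrowsum⟩, ?_, ?_⟩
  · show (0:ℝ) ≤ if jb = pick ib (Iinv jb) then φ (Iinv ib) (Iinv jb) else 0
    split
    · exact hφ.1 _ _
    · exact le_refl 0
  · -- cardinality bound
    set S : Finset (Fin d) := Finset.univ.filter fun i => φ i = eVec i with hS
    have hT : S.biUnion I ⊆ Finset.univ.filter
        fun ib : Fin (2 ^ Nat.clog 2 d) => φbar ib = eVec ib := by
      intro ib hib
      rw [Finset.mem_biUnion] at hib
      obtain ⟨i, hiS, hibI⟩ := hib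
      rw [Finset.mem_filter]
      exact ⟨Finset.mem_univ _, hself i ib hibI ((Finset.mem_filter.mp hiS).2)⟩
    have hTcard : (S.biUnion I).card = ∑ i ∈ S, (I i).card :=
      Finset.card_biUnion (fun x _ y _ hxy => hdisj x y hxy)
    have hdboundbar : ∑ i ∈ S, (I i).card ≤ dSelf φbar := by
      rw [← hTcard]; exact Finset.card_le_card hT
    have hntotal : ∑ i : Fin d, (I i).card = 2 ^ Nat.clog 2 d := by
      rw [← Finset.card_biUnion (fun x _ y _ hxy => hdisj x y hxy), hcover,
        Finset.card_univ, Fintype.card_fin]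
    have hsplit : ∑ i ∈ S, (I i).card + ∑ i ∈ Sᶜ, (I i).card = 2 ^ Nat.clog 2 d := by
      rw [Finset.sum_add_sum_compl]; exact hntotal
    have hcompl : ∑ i ∈ Sᶜ, (I i).card ≤ 2 * Sᶜ.card := by
      calc ∑ i ∈ Sᶜ, (I i).card ≤ ∑ _i ∈ Sᶜ, 2 :=
            Finset.sum_le_sum (fun i _ => hcard i)
        _ = 2 * Sᶜ.card := by rw [Finset.sum_const, smul_eq_mul, mul_comm]
    have hScard : Sᶜ.card = d - S.card := by
      rw [Finset.card_compl, Fintype.card_fin]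
    have hdS : dSelf φ = S.card := rfl
    have hSd : S.card ≤ d := by
      calc S.card ≤ Finset.univ.card := Finset.card_le_card (Finset.subset_univ S)
        _ = d := by rw [Finset.card_univ, Fintype.card_fin]
    rw [hdS]
    omega
  · -- loss preservation
    intro pbar _ l
    have hRHS : ∀ jb, act φbar pbar jb * l (Iinv jb) =
        ∑ ib, pbar ib * φbar ib jb * l (Iinv jb) := by
      intro jb
      rw [act, Finset.sum_mul]
    rw [Finset.sum_congr rfl (fun jb _ => hRHS jb), Finset.sum_comm]
    have hrow : ∀ ib, ∑ jb, pbar ib * φbar ib jb * l (Iinv jb) =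
        pbar ib * ∑ j, φ (Iinv ib) j * l j := by
      intro ib
      rw [Finset.mul_sum]
      rw [hpart (fun jb => pbar ib * φbar ib jb * l (Iinv jb))]
      congr 1
      funext j
      have : ∀ jb ∈ I j, pbar ib * φbar ib jb * l (Iinv jb) =
          pbar ib * (if jb = pick ib (Iinv jb)
            then φ (Iinv ib) (Iinv jb) * l (Iinv jb) else 0) := by
        intro jb hjb
        show pbar ib * (if jb = pick ib (Iinv jb) then φ (Iinv ib) (Iinv jb) else 0) *
          l (Iinv jb) = _
        split <;> ring
      rw [Finset.sum_congr rfl this, ← Finset.mul_sum,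
        hinner ib j (fun j' => φ (Iinv ib) j' * l j')]
    rw [Finset.sum_congr rfl (fun ib _ => hrow ib)]
    rw [hpart (fun ib => pbar ib * ∑ j, φ (Iinv ib) j * l j)]
    have hLHS : ∀ j : Fin d, act φ (fun i => ∑ ib ∈ I i, pbar ib) j * l j =
        ∑ i : Fin d, ∑ ib ∈ I i, pbar ib * (φ i j * l j) := by
      intro j
      rw [act, Finset.sum_mul]
      congr 1
      funext i
      rw [Finset.sum_mul, Finset.sum_mul]
      congr 1
      funext ib
      ring
    rw [Finset.sum_congr rfl (fun j _ => hLHS j), Finset.sum_comm]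
    refine Finset.sum_congr rfl (fun i _ => ?_)
    rw [Finset.sum_comm]
    refine Finset.sum_congr rfl (fun ib hib => ?_)
    rw [huniq i ib hib, Finset.mul_sum]
end
end

section
/- Let d̄ be a positive integer and let φ̄^improper ∈ ℝ^{d̄×d̄}. Define φ̄⁺ ∈ ℝ^{d̄×d̄} entrywise by φ̄⁺_{i,j} = max{φ̄^improper_{i,j}, 0}. Let ḡ⁺ ∈ ℝ^{d̄×d̄} be arbitrary, and define ḡ^improper ∈ ℝ^{d̄×d̄} entrywise by ḡ^improper_{i,j} = ḡ⁺_{i,j} if φ̄⁺_{i,j} = φ̄^improper_{i,j}, and ḡ^improper_{i,j} = min{ḡ⁺_{i,j}, 0} otherwise. Then for every matrix φ̄* ∈ ℝ^{d̄×d̄} with nonnegative entries, ⟨ḡ⁺, φ̄⁺ − φ̄*⟩ ≤ ⟨ḡ^improper, φ̄^improper − φ̄*⟩, where ⟨·,·⟩ is the Frobenius inner product. -/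
open scoped Classical

noncomputable section

/-- Stage 1 of the constraint oracle: with `φ̄⁺_{i,j} = max{φ̄ᵢᵐ_{i,j},0}`
and `ḡᵢᵐ_{i,j} = ḡ⁺_{i,j}` when no projection occurred and `min{ḡ⁺_{i,j},0}` otherwise,
we have `⟨ḡ⁺, φ̄⁺ − φ̄*⟩ ≤ ⟨ḡᵢᵐ, φ̄ᵢᵐ − φ̄*⟩` for every entrywise-nonnegative `φ̄*`. -/
theorem stage_one_regret_le (n : ℕ) (hn : 0 < n)
    (φim φp : Matrix (Fin n) (Fin n) ℝ)
    (hφp : ∀ i j, φp i j = max (φim i j) 0)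
    (gp gim : Matrix (Fin n) (Fin n) ℝ)
    (hgim : ∀ i j, gim i j = if φp i j = φim i j then gp i j else min (gp i j) 0)
    (φstar : Matrix (Fin n) (Fin n) ℝ) (hstar : ∀ i j, 0 ≤ φstar i j) :
    frob gp (φp - φstar) ≤ frob gim (φim - φstar) := by
  unfold frob
  apply Finset.sum_le_sum
  intro i _
  apply Finset.sum_le_sum
  intro j _
  simp only [Matrix.sub_apply]
  rcases eq_or_ne (φp i j) (φim i j) with h | h
  · rw [hgim i j, if_pos h, h]
  · have hφ := hφp i j
    have hneg : φim i j < 0 := by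
      rcases le_or_gt 0 (φim i j) with h0 | h0
      · exact absurd (by rw [hφ, max_eq_left h0]) h
      · exact h0
    have hp0 : φp i j = 0 := by rw [hφ, max_eq_right hneg.le]
    rw [hgim i j, if_neg h, hp0]
    have hs := hstar i j
    rcases le_or_gt 0 (gp i j) with hg | hg
    · rw [min_eq_right hg]
      nlinarith
    · rw [min_eq_left hg.le]
      nlinarith
end
end

section
/- Let d̄ be a positive integer, p̄ ∈ Δ(d̄), l̄ ∈ ℝ^{d̄}, and φ̄^improper ∈ ℝ^{d̄×d̄}. Define φ̄⁺ entrywise by φ̄⁺_{i,j} = max{φ̄^improper_{i,j}, 0}; define φ̄ ∈ 𝒮(d̄) row-wise by φ̄_i = φ̄⁺_i / ‖φ̄⁺_i‖₁ if ‖φ̄⁺_i‖₁ > 0 and φ̄_i = (1/d̄,…,1/d̄) otherwise; let ḡ = p̄ ⊗ l̄; define ḡ⁺ row-wise by ḡ⁺_i = ḡ_i − ⟨ḡ_i, φ̄_i⟩ · 𝟙, where 𝟙 is the all-ones vector; and define ḡ^improper entrywise by ḡ^improper_{i,j} = ḡ⁺_{i,j} if φ̄⁺_{i,j} = φ̄^improper_{i,j},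 and ḡ^improper_{i,j} = min{ḡ⁺_{i,j}, 0} otherwise. Then for every right stochastic matrix φ̄* ∈ 𝒮(d̄), ⟨ḡ, φ̄ − φ̄*⟩ ≤ ⟨ḡ^improper, φ̄^improper − φ̄*⟩, where ⟨·,·⟩ on matrices is the Frobenius inner product. -/
open scoped Classical

noncomputable section

/-- full constraint-oracle wrapper: combining the two projection stages
and the two gradient-processing stages, `⟨ḡ, φ̄ − φ̄*⟩ ≤ ⟨ḡᵢᵐ, φ̄ᵢᵐ − φ̄*⟩`
for every right stochastic `φ̄*`, where `ḡ = p̄ ⊗ l̄`. -/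
theorem wrapper_regret_le (n : ℕ) (hn : 0 < n)
    (pbar lbar : Fin n → ℝ) (hp : InSimplex pbar)
    (φim φp φ : Matrix (Fin n) (Fin n) ℝ)
    (hφp : ∀ i j, φp i j = max (φim i j) 0)
    (hφ : ∀ i, φ i = if 0 < ∑ j, |φp i j| then (∑ j, |φp i j|)⁻¹ • φp i
      else fun _ => (n : ℝ)⁻¹)
    (g gp gim : Matrix (Fin n) (Fin n) ℝ)
    (hg : g = outer pbar lbar)
    (hgp : ∀ i j, gp i j = g i j - ∑ k, g i k * φ i k)
    (hgim : ∀ i j, gim i j = if φp i j = φim i j then gp i j else min (gp i j) 0)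
    (φstar : Matrix (Fin n) (Fin n) ℝ) (hstar : IsStochastic φstar) :
    frob g (φ - φstar) ≤ frob gim (φim - φstar) := by
  unfold frob
  refine Finset.sum_le_sum fun i _ => ?_
  set c := ∑ k, g i k * φ i k with hc
  have hφnn : ∀ j, 0 ≤ φp i j := fun j => by rw [hφp]; exact le_max_right _ _
  have habs : ∑ j, |φp i j| = ∑ j, φp i j :=
    Finset.sum_congr rfl fun j _ => abs_of_nonneg (hφnn j)
  have hrow : ∑ j, φ i j = 1 := by
    by_cases h : 0 < ∑ j, |φp i j|
    · have h' := h
      rw [habs] at h'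
      simp only [hφ, if_pos h, Pi.smul_apply, smul_eq_mul]
      rw [← Finset.mul_sum, habs]
      field_simp
    · simp only [hφ, if_neg h]
      rw [Finset.sum_const, Finset.card_univ, Fintype.card_fin, nsmul_eq_mul]
      field_simp
  have hgpφ : ∑ j, gp i j * φ i j = 0 := by
    have h1 : ∑ j, gp i j * φ i j = (∑ j, g i j * φ i j) - c * ∑ j, φ i j := by
      rw [Finset.mul_sum, ← Finset.sum_sub_distrib]
      exact Finset.sum_congr rfl fun j _ => by rw [hgp]; ring
    rw [h1, hrow, ← hc]; ring
  have hgpφp : ∑ j, gp i j * φp i j = 0 := by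
    by_cases h : 0 < ∑ j, |φp i j|
    · have hφj : ∀ j, φp i j = (∑ j, |φp i j|) * φ i j := by
        intro j
        simp only [hφ, if_pos h, Pi.smul_apply, smul_eq_mul]
        field_simp
      calc ∑ j, gp i j * φp i j = (∑ j, |φp i j|) * ∑ j, gp i j * φ i j := by
            rw [Finset.mul_sum]; exact Finset.sum_congr rfl fun j _ => by rw [hφj]; ring
        _ = 0 := by rw [hgpφ, mul_zero]
    · have h0 : ∀ j, φp i j = 0 := by
        intro j
        have hz : ∑ j, |φp i j| = 0 :=
          le_antisymm (not_lt.mp h) (Finset.sum_nonneg fun j _ => abs_nonneg _)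
        have := (Finset.sum_eq_zero_iff_of_nonneg
          (fun j _ => abs_nonneg (φp i j))).mp hz j (Finset.mem_univ j)
        exact abs_eq_zero.mp this
      simp [h0]
  have hle : ∀ j, gim i j ≤ gp i j := by
    intro j
    rw [hgim]
    split
    · exact le_refl _
    · exact min_le_left _ _
  have hterm : ∀ j, gp i j * φp i j ≤ gim i j * φim i j := by
    intro j
    rw [hgim]
    by_cases h : φp i j = φim i j
    · rw [if_pos h, h]
    · rw [if_neg h]
      have hneg : φim i j < 0 := by
        by_contra hpos
        exact h (by rw [hφp]; exact max_eq_left (not_lt.mp hpos))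
      have hz : φp i j = 0 := by rw [hφp]; exact max_eq_right hneg.le
      rw [hz, mul_zero]
      have hmin : gp i j ⊓ 0 ≤ 0 := min_le_right _ _
      nlinarith
  have hstar' : ∑ j, gim i j * φstar i j ≤ ∑ j, gp i j * φstar i j :=
    Finset.sum_le_sum fun j _ => mul_le_mul_of_nonneg_right (hle j) (hstar.1 i j)
  have hlhs : ∑ j, g i j * (φ - φstar) i j = - ∑ j, gp i j * φstar i j := by
    have h1 : ∀ j, g i j * (φ - φstar) i j
        = gp i j * φ i j - gp i j * φstar i j + c * (φ i j - φstar i j) := by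
      intro j
      simp only [Matrix.sub_apply]
      rw [hgp i j, ← hc]
      ring
    rw [Finset.sum_congr rfl fun j _ => h1 j]
    rw [Finset.sum_add_distrib, Finset.sum_sub_distrib, hgpφ, ← Finset.mul_sum,
      Finset.sum_sub_distrib, hrow, hstar.2 i]
    ring
  have hrhs : (∑ j, gp i j * φp i j) - ∑ j, gp i j * φstar i j
      ≤ ∑ j, gim i j * (φim - φstar) i j := by
    have h1 : ∀ j, gim i j * (φim - φstar) i j = gim i j * φim i j - gim i j * φstar i j := by
      intro j; simp only [Matrix.sub_apply]; ring
    rw [Finset.sum_congr rfl fun j _ => h1 j, Finset.sum_sub_distrib]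
    have := Finset.sum_le_sum fun j (_ : j ∈ Finset.univ) => hterm j
    linarith
  rw [hlhs]
  rw [hgpφp] at hrhs
  linarith
end
end

section
/- Let S be a positive integer, d̄ = 2^S, p̄ ∈ Δ(d̄), l̄ ∈ [−1,1]^{d̄}, φ̄ ∈ 𝒮(d̄), and φ̄^improper ∈ ℝ^{d̄×d̄}. Set ḡ = p̄ ⊗ l̄; define ḡ⁺ row-wise by ḡ⁺_i = ḡ_i − ⟨ḡ_i, φ̄_i⟩ · 𝟙, where 𝟙 is the all-ones vector; and define ḡ^improper entrywise by ḡ^improper_{i,j} = ḡ⁺_{i,j} if φ̄^improper_{i,j} ≥ 0, and ḡ^improper_{i,j} = min{ḡ⁺_{i,j}, 0} otherwise. Then for every Haar vector h ∈ ℋ with support I^{(h)} and every j ∈ {1,…,d̄}: |⟨ḡ^improper, h ⊗ e^{(j)}⟩| ≤ 2 Σ_{i ∈ I^{(h)}} p̄_i, where ⟨·,·⟩ on matrices is the Frobenius inner product. -/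
open scoped Classical

noncomputable section

/-- the processed gradient `ḡᵢᵐ` satisfies
`|⟨ḡᵢᵐ, h ⊗ e^(j)⟩| ≤ 2 Σ_{i ∈ supp(h)} p̄_i` for every Haar vector `h ∈ ℋ`
and every `j`. -/
theorem processed_gradient_haar_bound (S : ℕ) (hS : 1 ≤ S)
    (pbar lbar : Fin (2 ^ S) → ℝ) (hp : InSimplex pbar) (hl : ∀ i, |lbar i| ≤ 1)
    (φ : Matrix (Fin (2 ^ S)) (Fin (2 ^ S)) ℝ) (hφ : IsStochastic φ)
    (φim : Matrix (Fin (2 ^ S)) (Fin (2 ^ S)) ℝ)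
    (g gp gim : Matrix (Fin (2 ^ S)) (Fin (2 ^ S)) ℝ)
    (hg : g = outer pbar lbar)
    (hgp : ∀ i j, gp i j = g i j - ∑ k, g i k * φ i k)
    (hgim : ∀ i j, gim i j = if 0 ≤ φim i j then gp i j else min (gp i j) 0) :
    ∀ h ∈ haarSet S, ∀ j : Fin (2 ^ S),
      |frob gim (outer h (eVec j))| ≤
        2 * ∑ i ∈ Finset.univ.filter (fun i : Fin (2 ^ S) => h i ≠ 0), pbar i := by
  intro h hh j
  have hp0 : ∀ i, 0 ≤ pbar i := hp.1
  -- entries of h are bounded by 1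
  have habs : ∀ i, |h i| ≤ 1 := by
    rcases hh with hh | ⟨s, l, _, _, _, _, hv⟩
    · subst hh; intro i; simp
    · subst hv; intro i; unfold haarVec
      split_ifs <;> norm_num
  -- bound on gim entries
  have hgbound : ∀ i j', |gim i j'| ≤ 2 * pbar i := by
    intro i j'
    have hgij : ∀ k : Fin (2 ^ S), |g i k| ≤ pbar i := by
      intro k
      rw [hg]
      simp only [outer, Matrix.of_apply, abs_mul, abs_of_nonneg (hp0 i)]
      calc pbar i * |lbar k| ≤ pbar i * 1 :=
            mul_le_mul_of_nonneg_left (hl k) (hp0 i)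
        _ = pbar i := mul_one _
    have hc : |∑ k, g i k * φ i k| ≤ pbar i := by
      calc |∑ k, g i k * φ i k| ≤ ∑ k, |g i k * φ i k| :=
            Finset.abs_sum_le_sum_abs _ _
        _ ≤ ∑ k, pbar i * φ i k := by
            apply Finset.sum_le_sum
            intro k _
            rw [abs_mul, abs_of_nonneg (hφ.1 i k)]
            exact mul_le_mul_of_nonneg_right (hgij k) (hφ.1 i k)
        _ = pbar i := by rw [← Finset.mul_sum, hφ.2 i, mul_one]
    have hgp' : |gp i j'| ≤ 2 * pbar i := by
      rw [hgp i j']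
      calc |g i j' - ∑ k, g i k * φ i k| ≤ |g i j'| + |∑ k, g i k * φ i k| :=
            abs_sub _ _
        _ ≤ pbar i + pbar i := add_le_add (hgij j') hc
        _ = 2 * pbar i := by ring
    rw [hgim i j']
    split_ifs with hcond
    · exact hgp'
    · rcases le_or_gt (gp i j') 0 with hle | hlt
      · rw [min_eq_left hle]; exact hgp'
      · rw [min_eq_right hlt.le]; simpa using le_trans (abs_nonneg _) hgp'
  -- compute the Frobenius inner product
  have hsum : frob gim (outer h (eVec j)) = ∑ i, gim i j * h i := by
    unfold frob outer eVec
    simp only [Matrix.of_apply, mul_ite, mul_one, mul_zero]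
    congr 1
    ext i
    rw [Finset.sum_ite_eq' Finset.univ j (fun k => gim i k * h i)]
    simp [mul_comm]
  rw [hsum]
  have hfilter : ∑ i, gim i j * h i =
      ∑ i ∈ Finset.univ.filter (fun i : Fin (2 ^ S) => h i ≠ 0), gim i j * h i := by
    symm
    apply Finset.sum_filter_of_ne
    intro x _ hx hx0
    exact hx (by rw [hx0, mul_zero])
  rw [hfilter, Finset.mul_sum]
  calc |∑ i ∈ Finset.univ.filter (fun i : Fin (2 ^ S) => h i ≠ 0), gim i j * h i|
      ≤ ∑ i ∈ Finset.univ.filter (fun i : Fin (2 ^ S) => h i ≠ 0), |gim i j * h i| :=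
        Finset.abs_sum_le_sum_abs _ _
    _ ≤ ∑ i ∈ Finset.univ.filter (fun i : Fin (2 ^ S) => h i ≠ 0), 2 * pbar i := by
        apply Finset.sum_le_sum
        intro i _
        rw [abs_mul]
        calc |gim i j| * |h i| ≤ (2 * pbar i) * 1 :=
              mul_le_mul (hgbound i j) (habs i) (abs_nonneg _)
                (by linarith [hp0 i])
          _ = 2 * pbar i := mul_one _
end
end

section
/- Let S and T be positive integers, d̄ = 2^S, s ∈ {1,…,S}, let φ̄* ∈ 𝒮(d̄) be a right stochastic matrix with rows φ̄*_1,…,φ̄*_{d̄}, and let p̄_1,…,p̄_T ∈ Δ(d̄). Then Σ_{l=1}^{2^{S−s}} [ (1/|I^{(s,l)}|) Σ_{j=1}^{d̄} |⟨φ̄*, h^{(s,l)} ⊗ e^{(j)}⟩| ] · √(1 + Σ_{t=1}^T Σ_{i ∈ I^{(s,l)}} p̄_{t,i}) ≤ √(Σ_{i=1}^{d̄−1} 1[φ̄*_i ≠ φ̄*_{i+1}]) · √(2^{S−s} + T), where ⟨·,·⟩ is the Frobenius inner product. -/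
open scoped Classical

noncomputable section

section AuxLemmas

lemma aux_filter_range_and (a b n : ℕ) (hbn : b ≤ n) :
    (Finset.range n).filter (fun i => a ≤ i ∧ i < b) = Finset.Ico a b := by
  ext i; simp only [Finset.mem_filter, Finset.mem_range, Finset.mem_Ico]; omega

lemma aux_sum_indicator (n a b : ℕ) (hb : b ≤ n) (c : ℝ) :
    ∑ i : Fin n, (if a ≤ (i:ℕ) ∧ (i:ℕ) < b then c else 0) = (b - a : ℕ) * c := by
  rw [Fin.sum_univ_eq_sum_range (fun i => if a ≤ i ∧ i < b then c else 0)]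
  rw [← Finset.sum_filter, aux_filter_range_and a b n hb, Finset.sum_const, Nat.card_Ico,
    nsmul_eq_mul]

lemma aux_haar_split (S s l : ℕ) (i : Fin (2^S)) :
    haarVec S s l i =
      (if 2^s*(l-1) ≤ (i:ℕ) ∧ (i:ℕ) < 2^s*(l-1) + 2^(s-1) then (1:ℝ) else 0)
      + (if 2^s*(l-1) + 2^(s-1) ≤ (i:ℕ) ∧ (i:ℕ) < 2^s*l then (-1:ℝ) else 0) := by
  unfold haarVec
  split_ifs <;> first | (exfalso; omega) | norm_num

lemma aux_pow_split (s : ℕ) (hs1 : 1 ≤ s) : 2^(s-1) + 2^(s-1) = 2^s := by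
  have : s - 1 + 1 = s := by omega
  rw [← two_mul, ← pow_succ', this]

lemma aux_block_le (S s l : ℕ) (hs2 : s ≤ S) (hl2 : l ≤ 2^(S-s)) : 2^s * l ≤ 2^S := by
  calc 2^s * l ≤ 2^s * 2^(S-s) := Nat.mul_le_mul_left _ hl2
  _ = 2^S := by rw [← pow_add]; congr 1; omega

lemma aux_haar_sum (S s l : ℕ) (hs1 : 1 ≤ s) (hs2 : s ≤ S) (hl1 : 1 ≤ l) (hl2 : l ≤ 2^(S-s)) :
    ∑ i : Fin (2^S), haarVec S s l i = 0 := by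
  have hpow : 0 < 2^(s-1) := by positivity
  have hps := aux_pow_split s hs1
  have hsl : 2^s * l ≤ 2^S := aux_block_le S s l hs2 hl2
  have hmul : 2^s * (l-1) + 2^s = 2^s * l := by
    have hl : l - 1 + 1 = l := by omega
    calc 2^s*(l-1) + 2^s = 2^s * (l-1+1) := by ring
    _ = 2^s * l := by rw [hl]
  simp only [aux_haar_split]
  rw [Finset.sum_add_distrib,
    aux_sum_indicator _ _ _ (by omega) 1, aux_sum_indicator _ _ _ hsl (-1)]
  have e1 : (2^s*(l-1) + 2^(s-1)) - 2^s*(l-1) = 2^(s-1) := by omega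
  have e2 : 2^s*l - (2^s*(l-1) + 2^(s-1)) = 2^(s-1) := by omega
  rw [e1, e2]; ring

lemma aux_haar_abs (S s l : ℕ) (hs1 : 1 ≤ s) (hl1 : 1 ≤ l) (i : Fin (2^S)) :
    |haarVec S s l i| = if 2^s*(l-1) ≤ (i:ℕ) ∧ (i:ℕ) < 2^s*l then (1:ℝ) else 0 := by
  have hpow : 0 < 2^(s-1) := by positivity
  have hps := aux_pow_split s hs1
  have hmul : 2^s * (l-1) + 2^s = 2^s * l := by
    have hl : l - 1 + 1 = l := by omega
    calc 2^s*(l-1) + 2^s = 2^s * (l-1+1) := by ring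
    _ = 2^s * l := by rw [hl]
  unfold haarVec
  split_ifs <;> first | (exfalso; omega) | norm_num

lemma aux_haar_zero (S s l : ℕ) (hs1 : 1 ≤ s) (hl1 : 1 ≤ l) (i : Fin (2^S))
    (h : ¬(2^s*(l-1) ≤ (i:ℕ) ∧ (i:ℕ) < 2^s*l)) : haarVec S s l i = 0 := by
  have := aux_haar_abs S s l hs1 hl1 i
  rw [if_neg h] at this
  exact abs_eq_zero.mp this

lemma aux_frob_outer_eVec {n : ℕ} (A : Matrix (Fin n) (Fin n) ℝ) (x : Fin n → ℝ) (j : Fin n) :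
    frob A (outer x (eVec j)) = ∑ i, x i * A i j := by
  unfold frob outer eVec
  simp only [Matrix.of_apply, mul_ite, mul_one, mul_zero]
  refine Finset.sum_congr rfl (fun i _ => ?_)
  rw [Finset.sum_congr rfl (fun k _ => by split_ifs with h <;> simp [h] : ∀ k ∈ Finset.univ,
    (if k = j then A i k * x i else 0) = if k = j then A i j * x i else 0)]
  rw [Finset.sum_ite_eq' Finset.univ j (fun _ => A i j * x i)]
  simp [mul_comm]

lemma aux_rows_const {n : ℕ} (M : Matrix (Fin n) (Fin n) ℝ) (a b : ℕ) (hbn : b ≤ n)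
    (hno : ∀ (k : Fin n) (h' : (k:ℕ)+1 < n), a ≤ (k:ℕ) → (k:ℕ)+1 < b → M k = M ⟨(k:ℕ)+1, h'⟩) :
    ∀ (m : ℕ) (i i' : Fin n), a ≤ (i:ℕ) → ((i':ℕ)) < b → (i':ℕ) = (i:ℕ) + m → M i = M i' := by
  intro m
  induction m with
  | zero =>
    intro i i' _ _ heq
    have : i = i' := Fin.ext (by omega)
    rw [this]
  | succ m ih =>
    intro i i' hai hib heq
    have hmid : (i:ℕ) + m < n := by omega
    have h1 : M i = M ⟨(i:ℕ)+m, hmid⟩ :=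
      ih i ⟨(i:ℕ)+m, hmid⟩ hai (show (i:ℕ)+m < b by omega) rfl
    have h'' : (i:ℕ)+m+1 < n := by omega
    have h2 := hno ⟨(i:ℕ)+m, hmid⟩ h'' (show a ≤ (i:ℕ)+m by omega)
      (show (i:ℕ)+m+1 < b by omega)
    have hidx : (⟨((⟨(i:ℕ)+m, hmid⟩ : Fin n) : ℕ) + 1, h''⟩ : Fin n) = i' := by
      apply Fin.ext
      show (i:ℕ)+m+1 = (i':ℕ)
      omega
    rw [h1, h2, hidx]

lemma aux_pointwise_bound (S s : ℕ) (hs1 : 1 ≤ s) (hs2 : s ≤ S)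
    (φ : Matrix (Fin (2^S)) (Fin (2^S)) ℝ) (hφ : IsStochastic φ)
    (l : ℕ) (hl1 : 1 ≤ l) (hl2 : l ≤ 2^(S-s)) :
    (2^s : ℝ)⁻¹ * ∑ j : Fin (2^S), |frob φ (outer (haarVec S s l) (eVec j))| ≤
      (if ∃ (k : Fin (2^S)) (h' : (k:ℕ)+1 < 2^S),
          2^s*(l-1) ≤ (k:ℕ) ∧ (k:ℕ)+1 < 2^s*l ∧ φ k ≠ φ ⟨(k:ℕ)+1, h'⟩
        then (1:ℝ) else 0) := by
  have hb : 2^s * l ≤ 2^S := aux_block_le S s l hs2 hl2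
  have hfe : ∀ j, frob φ (outer (haarVec S s l) (eVec j))
      = ∑ i, haarVec S s l i * φ i j := fun j => aux_frob_outer_eVec φ _ j
  split_ifs with hex
  · -- bound by 1
    have key : ∀ j : Fin (2^S), |frob φ (outer (haarVec S s l) (eVec j))|
        ≤ ∑ i, |haarVec S s l i| * φ i j := by
      intro j
      rw [hfe j]
      calc |∑ i, haarVec S s l i * φ i j| ≤ ∑ i, |haarVec S s l i * φ i j| :=
        Finset.abs_sum_le_sum_abs _ _
      _ = ∑ i, |haarVec S s l i| * φ i j := by
        refine Finset.sum_congr rfl (fun i _ => ?_)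
        rw [abs_mul, abs_of_nonneg (hφ.1 i j)]
    have hsum : ∑ j : Fin (2^S), ∑ i : Fin (2^S), |haarVec S s l i| * φ i j = 2^s := by
      rw [Finset.sum_comm]
      have : ∀ i : Fin (2^S), ∑ j : Fin (2^S), |haarVec S s l i| * φ i j
          = |haarVec S s l i| := by
        intro i
        rw [← Finset.mul_sum, hφ.2 i, mul_one]
      rw [Finset.sum_congr rfl (fun i _ => this i)]
      simp only [aux_haar_abs S s l hs1 hl1]
      rw [aux_sum_indicator _ _ _ hb 1]
      have : 2^s*l - 2^s*(l-1) = 2^s := by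
        have hl : l - 1 + 1 = l := by omega
        have : 2^s*(l-1) + 2^s = 2^s * l := by
          calc 2^s*(l-1) + 2^s = 2^s * (l-1+1) := by ring
          _ = 2^s * l := by rw [hl]
        omega
      rw [this]; push_cast; ring
    calc (2^s : ℝ)⁻¹ * ∑ j : Fin (2^S), |frob φ (outer (haarVec S s l) (eVec j))|
        ≤ (2^s : ℝ)⁻¹ * ∑ j : Fin (2^S), ∑ i : Fin (2^S), |haarVec S s l i| * φ i j := by
          apply mul_le_mul_of_nonneg_left (Finset.sum_le_sum fun j _ => key j)
          positivity
    _ = 1 := by rw [hsum]; rw [inv_mul_cancel₀ (by positivity)]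
  · -- all frobs vanish
    push_neg at hex
    have hno : ∀ (k : Fin (2^S)) (h' : (k:ℕ)+1 < 2^S),
        2^s*(l-1) ≤ (k:ℕ) → (k:ℕ)+1 < 2^s*l → φ k = φ ⟨(k:ℕ)+1, h'⟩ := by
      intro k h' h1 h2
      by_contra hne
      exact hne (hex k h' h1 h2)
    have ha : 2^s*(l-1) < 2^S := by
      have : 2^s*(l-1) < 2^s*l := by
        have : l - 1 < l := by omega
        exact mul_lt_mul_of_pos_left this (by positivity)
      omega
    set i0 : Fin (2^S) := ⟨2^s*(l-1), ha⟩ with hi0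
    have hconst : ∀ i : Fin (2^S), 2^s*(l-1) ≤ (i:ℕ) → (i:ℕ) < 2^s*l → φ i0 = φ i := by
      intro i h1 h2
      exact aux_rows_const φ (2^s*(l-1)) (2^s*l) hb hno ((i:ℕ) - 2^s*(l-1)) i0 i
        (le_refl _) h2 (by simp [hi0]; omega)
    have hzero : ∀ j, frob φ (outer (haarVec S s l) (eVec j)) = 0 := by
      intro j
      rw [hfe j]
      have : ∀ i : Fin (2^S), haarVec S s l i * φ i j = haarVec S s l i * φ i0 j := by
        intro i
        by_cases hblk : 2^s*(l-1) ≤ (i:ℕ) ∧ (i:ℕ) < 2^s*l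
        · rw [← hconst i hblk.1 hblk.2]
        · rw [aux_haar_zero S s l hs1 hl1 i hblk]; ring
      rw [Finset.sum_congr rfl (fun i _ => this i), ← Finset.sum_mul,
        aux_haar_sum S s l hs1 hs2 hl1 hl2, zero_mul]
    simp only [hzero, abs_zero, Finset.sum_const_zero, mul_zero, le_refl]

end AuxLemmas

set_option maxHeartbeats 1600000 in
/-- key Cauchy–Schwarz/sparsity step. -/
theorem scale_sum_cauchy_schwarz_bound (S T : ℕ) (hS : 1 ≤ S) (hT : 1 ≤ T)
    (s : ℕ) (hs1 : 1 ≤ s) (hs2 : s ≤ S)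
    (φstar : Matrix (Fin (2 ^ S)) (Fin (2 ^ S)) ℝ) (hφ : IsStochastic φstar)
    (p : Fin T → Fin (2 ^ S) → ℝ) (hp : ∀ t, InSimplex (p t)) :
    ∑ l ∈ Finset.Icc 1 (2 ^ (S - s)),
      ((2 ^ s : ℝ)⁻¹ * ∑ j : Fin (2 ^ S), |frob φstar (outer (haarVec S s l) (eVec j))|) *
        Real.sqrt (1 + ∑ t : Fin T, ∑ i ∈ Finset.univ.filter
          (fun i : Fin (2 ^ S) => 2 ^ s * (l - 1) ≤ (i : ℕ) ∧ (i : ℕ) < 2 ^ s * l),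
          p t i) ≤
      Real.sqrt (rowSwitch φstar) * Real.sqrt ((2 ^ (S - s) : ℝ) + T) := by
  classical
  have h2spos : (0:ℕ) < 2^s := by positivity
  have hLn : 2^s * 2^(S-s) = 2^S := by rw [← pow_add]; congr 1; omega
  have hmul : ∀ l : ℕ, 1 ≤ l → 2^s*(l-1) + 2^s = 2^s*l := by
    intro l hl
    have h : l - 1 + 1 = l := by omega
    calc 2^s*(l-1) + 2^s = 2^s * (l-1+1) := by ring
    _ = 2^s * l := by rw [h]
  -- the fiber map
  have hmaps : ∀ i : Fin (2^S), (i:ℕ)/2^s + 1 ∈ Finset.Icc 1 (2^(S-s)) := by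
    intro i
    have h1 : (i:ℕ) / 2^s < 2^(S-s) := by
      rw [Nat.div_lt_iff_lt_mul h2spos, mul_comm, hLn]
      exact i.isLt
    simp only [Finset.mem_Icc]
    exact ⟨Nat.le_add_left 1 _, Nat.succ_le_of_lt h1⟩
  have hfiber : ∀ l : ℕ, 1 ≤ l → ∀ i : Fin (2^S),
      ((i:ℕ)/2^s + 1 = l ↔ (2^s*(l-1) ≤ (i:ℕ) ∧ (i:ℕ) < 2^s*l)) := by
    intro l hl i
    constructor
    · intro hq
      have hq' : (i:ℕ)/2^s = l - 1 := by omega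
      have hdm := Nat.div_add_mod (i:ℕ) (2^s)
      rw [hq'] at hdm
      have hmod : (i:ℕ) % 2^s < 2^s := Nat.mod_lt _ h2spos
      have := hmul l hl
      omega
    · rintro ⟨h1, h2⟩
      have hle : l - 1 ≤ (i:ℕ)/2^s := by
        rw [Nat.le_div_iff_mul_le h2spos, mul_comm]
        exact h1
      have hlt : (i:ℕ)/2^s < l - 1 + 1 := by
        rw [Nat.div_lt_iff_lt_mul h2spos]
        have hll : l - 1 + 1 = l := by omega
        rw [hll, mul_comm]
        exact h2
      omega
  -- indicator function χ
  set χ : ℕ → ℝ := fun l => if ∃ (k : Fin (2^S)) (h' : (k:ℕ)+1 < 2^S),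
      2^s*(l-1) ≤ (k:ℕ) ∧ (k:ℕ)+1 < 2^s*l ∧ φstar k ≠ φstar ⟨(k:ℕ)+1, h'⟩
    then (1:ℝ) else 0 with hχdef
  have hχ01 : ∀ l, χ l = 0 ∨ χ l = 1 := by
    intro l
    simp only [hχdef]
    split_ifs <;> simp
  have hχnn : ∀ l, 0 ≤ χ l := by
    intro l; rcases hχ01 l with h | h <;> rw [h] <;> norm_num
  -- Step 1 : pointwise bound
  have step1 : ∑ l ∈ Finset.Icc 1 (2 ^ (S - s)),
      ((2 ^ s : ℝ)⁻¹ * ∑ j : Fin (2 ^ S), |frob φstar (outer (haarVec S s l) (eVec j))|) *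
        Real.sqrt (1 + ∑ t : Fin T, ∑ i ∈ Finset.univ.filter
          (fun i : Fin (2 ^ S) => 2 ^ s * (l - 1) ≤ (i : ℕ) ∧ (i : ℕ) < 2 ^ s * l), p t i) ≤
      ∑ l ∈ Finset.Icc 1 (2 ^ (S - s)),
        χ l * Real.sqrt (1 + ∑ t : Fin T, ∑ i ∈ Finset.univ.filter
          (fun i : Fin (2 ^ S) => 2 ^ s * (l - 1) ≤ (i : ℕ) ∧ (i : ℕ) < 2 ^ s * l), p t i) := by
    apply Finset.sum_le_sum
    intro l hl
    rw [Finset.mem_Icc] at hl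
    apply mul_le_mul_of_nonneg_right _ (Real.sqrt_nonneg _)
    simp only [hχdef]
    exact aux_pointwise_bound S s hs1 hs2 φstar hφ l hl.1 hl.2
  -- Cauchy–Schwarz
  have bnn : ∀ l : ℕ, (0:ℝ) ≤ Real.sqrt (1 + ∑ t : Fin T, ∑ i ∈ Finset.univ.filter
      (fun i : Fin (2 ^ S) => 2 ^ s * (l - 1) ≤ (i : ℕ) ∧ (i : ℕ) < 2 ^ s * l), p t i) :=
    fun l => Real.sqrt_nonneg _
  have step2 : ∑ l ∈ Finset.Icc 1 (2 ^ (S - s)),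
        χ l * Real.sqrt (1 + ∑ t : Fin T, ∑ i ∈ Finset.univ.filter
          (fun i : Fin (2 ^ S) => 2 ^ s * (l - 1) ≤ (i : ℕ) ∧ (i : ℕ) < 2 ^ s * l), p t i) ≤
      Real.sqrt (∑ l ∈ Finset.Icc 1 (2 ^ (S - s)), (χ l)^2) *
      Real.sqrt (∑ l ∈ Finset.Icc 1 (2 ^ (S - s)),
        (Real.sqrt (1 + ∑ t : Fin T, ∑ i ∈ Finset.univ.filter
          (fun i : Fin (2 ^ S) => 2 ^ s * (l - 1) ≤ (i : ℕ) ∧ (i : ℕ) < 2 ^ s * l), p t i))^2) := by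
    set g : ℕ → ℝ := fun l => Real.sqrt (1 + ∑ t : Fin T, ∑ i ∈ Finset.univ.filter
      (fun i : Fin (2 ^ S) => 2 ^ s * (l - 1) ≤ (i : ℕ) ∧ (i : ℕ) < 2 ^ s * l), p t i)
    have h := Finset.sum_mul_sq_le_sq_mul_sq (Finset.Icc 1 (2^(S-s))) χ g
    have h1 : 0 ≤ ∑ l ∈ Finset.Icc 1 (2^(S-s)), χ l * g l :=
      Finset.sum_nonneg fun l _ => mul_nonneg (hχnn l) (Real.sqrt_nonneg _)
    calc ∑ l ∈ Finset.Icc 1 (2^(S-s)), χ l * g l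
        = Real.sqrt ((∑ l ∈ Finset.Icc 1 (2^(S-s)), χ l * g l)^2) := (Real.sqrt_sq h1).symm
    _ ≤ Real.sqrt ((∑ l ∈ Finset.Icc 1 (2^(S-s)), χ l ^2) *
        (∑ l ∈ Finset.Icc 1 (2^(S-s)), g l ^2)) := Real.sqrt_le_sqrt h
    _ = _ := Real.sqrt_mul (Finset.sum_nonneg fun l _ => sq_nonneg _) _
  -- Step 3/4 : Σ χ² = Σ χ ≤ rowSwitch
  have step3 : ∑ l ∈ Finset.Icc 1 (2 ^ (S - s)), (χ l)^2
      = ∑ l ∈ Finset.Icc 1 (2 ^ (S - s)), χ l := by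
    refine Finset.sum_congr rfl (fun l _ => ?_)
    rcases hχ01 l with h | h <;> rw [h] <;> norm_num
  have step4 : ∑ l ∈ Finset.Icc 1 (2 ^ (S - s)), χ l ≤ (rowSwitch φstar : ℝ) := by
    set SwS := Finset.univ.filter fun i : Fin (2^S) =>
      ∃ h : (i : ℕ) + 1 < 2^S, φstar i ≠ φstar ⟨(i : ℕ) + 1, h⟩ with hSwS
    have hcard : ∑ l ∈ Finset.Icc 1 (2^(S-s)),
        ((SwS.filter fun i : Fin (2^S) => (i:ℕ)/2^s + 1 = l).card : ℝ) = (SwS.card : ℝ) := by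
      rw [← Nat.cast_sum]
      congr 1
      exact (Finset.card_eq_sum_card_fiberwise
        (fun i _ => hmaps i)).symm
    have hpt : ∀ l ∈ Finset.Icc 1 (2^(S-s)),
        χ l ≤ ((SwS.filter fun i : Fin (2^S) => (i:ℕ)/2^s + 1 = l).card : ℝ) := by
      intro l hl
      rw [Finset.mem_Icc] at hl
      rcases hχ01 l with h | h
      · rw [h]; positivity
      · rw [h]
        have hex : ∃ (k : Fin (2^S)) (h' : (k:ℕ)+1 < 2^S),
            2^s*(l-1) ≤ (k:ℕ) ∧ (k:ℕ)+1 < 2^s*l ∧ φstar k ≠ φstar ⟨(k:ℕ)+1, h'⟩ := by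
          by_contra hc
          simp only [hχdef, hc, if_false] at h
          norm_num at h
        obtain ⟨k, h', hk1, hk2, hk3⟩ := hex
        have hmem : k ∈ SwS.filter fun i : Fin (2^S) => (i:ℕ)/2^s + 1 = l := by
          rw [Finset.mem_filter, hSwS, Finset.mem_filter]
          refine ⟨⟨Finset.mem_univ _, ⟨h', hk3⟩⟩, ?_⟩
          rw [hfiber l hl.1 k]
          exact ⟨hk1, by omega⟩
        have : 1 ≤ (SwS.filter fun i : Fin (2^S) => (i:ℕ)/2^s + 1 = l).card :=
          Finset.card_pos.mpr ⟨k, hmem⟩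
        exact_mod_cast this
    calc ∑ l ∈ Finset.Icc 1 (2^(S-s)), χ l
        ≤ ∑ l ∈ Finset.Icc 1 (2^(S-s)),
          ((SwS.filter fun i : Fin (2^S) => (i:ℕ)/2^s + 1 = l).card : ℝ) := Finset.sum_le_sum hpt
    _ = (SwS.card : ℝ) := hcard
    _ = (rowSwitch φstar : ℝ) := by rw [hSwS]; rfl
  -- Step 5 : Σ b² = L + T
  have psum : ∀ (t : Fin T), ∑ l ∈ Finset.Icc 1 (2^(S-s)), ∑ i ∈ Finset.univ.filter
      (fun i : Fin (2 ^ S) => 2 ^ s * (l - 1) ≤ (i : ℕ) ∧ (i : ℕ) < 2 ^ s * l), p t i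
      = 1 := by
    intro t
    have h := Finset.sum_fiberwise_of_maps_to (s := (Finset.univ : Finset (Fin (2^S))))
      (t := Finset.Icc 1 (2^(S-s))) (g := fun i : Fin (2^S) => (i:ℕ)/2^s + 1)
      (fun i _ => hmaps i) (p t)
    rw [← (hp t).2, ← h]
    refine Finset.sum_congr rfl (fun l hl => ?_)
    rw [Finset.mem_Icc] at hl
    refine Finset.sum_congr ?_ (fun _ _ => rfl)
    apply Finset.filter_congr
    intro i _
    simp only [hfiber l hl.1 i]
  have step5 : ∑ l ∈ Finset.Icc 1 (2 ^ (S - s)),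
      (Real.sqrt (1 + ∑ t : Fin T, ∑ i ∈ Finset.univ.filter
        (fun i : Fin (2 ^ S) => 2 ^ s * (l - 1) ≤ (i : ℕ) ∧ (i : ℕ) < 2 ^ s * l), p t i))^2
      = (2 ^ (S - s) : ℝ) + T := by
    have hsq : ∀ l ∈ Finset.Icc 1 (2^(S-s)),
        (Real.sqrt (1 + ∑ t : Fin T, ∑ i ∈ Finset.univ.filter
          (fun i : Fin (2 ^ S) => 2 ^ s * (l - 1) ≤ (i : ℕ) ∧ (i : ℕ) < 2 ^ s * l), p t i))^2
        = 1 + ∑ t : Fin T, ∑ i ∈ Finset.univ.filter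
          (fun i : Fin (2 ^ S) => 2 ^ s * (l - 1) ≤ (i : ℕ) ∧ (i : ℕ) < 2 ^ s * l), p t i := by
      intro l _
      apply Real.sq_sqrt
      have : (0:ℝ) ≤ ∑ t : Fin T, ∑ i ∈ Finset.univ.filter
          (fun i : Fin (2 ^ S) => 2 ^ s * (l - 1) ≤ (i : ℕ) ∧ (i : ℕ) < 2 ^ s * l), p t i :=
        Finset.sum_nonneg fun t _ => Finset.sum_nonneg fun i _ => (hp t).1 i
      linarith
    rw [Finset.sum_congr rfl hsq, Finset.sum_add_distrib, Finset.sum_const, Nat.card_Icc]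
    rw [Finset.sum_comm]
    rw [Finset.sum_congr rfl (fun t _ => psum t), Finset.sum_const]
    simp only [nsmul_eq_mul, mul_one, Finset.card_univ, Fintype.card_fin]
    push_cast
    ring
  -- combine
  refine le_trans step1 (le_trans step2 ?_)
  rw [step3, step5]
  apply mul_le_mul_of_nonneg_right _ (Real.sqrt_nonneg _)
  apply Real.sqrt_le_sqrt
  exact step4
end
end
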